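/- arXiv:2407.01290 — 4 statements merged into one kernel-verified Lean document; each statement's English description precedes it below -/
import Mathlib

section
/- Let d, d' be positive integers, let κ_1 < 0 and κ_2 < 0, let x ∈ 𝕃^{d, κ_1}, and let f_r : ℝ^d → ℝ^{d'} be an arbitrary function applied to the space-like part x_s of x; set w = f_r(x_s). Then the point HRC(x) := (√((κ_1/κ_2)·‖w‖² − 1/κ_2), √(κ_1/κ_2)·w) ∈ ℝ^{d'+1} lies in 𝕃^{d', κ_2}; that is, ⟨HRC(x), HRC(x)⟩_L = 1/κ_2 and its time-like component is strictly positive. -/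
/-- Real inverse hyperbolic cosine. -/
noncomputable def arcosh (x : ℝ) : ℝ := Real.log (x + Real.sqrt (x ^ 2 - 1))

/-- Lorentzian inner product on ℝ^{n+1}: ⟨x, y⟩_L = −x₀y₀ + Σ_{i=1}^n xᵢyᵢ. -/
noncomputable def lorentzInner {n : ℕ} (x y : Fin (n + 1) → ℝ) : ℝ :=
  -(x 0 * y 0) + ∑ i : Fin n, x i.succ * y i.succ

/-- The Lorentz model 𝕃^{n,κ}: ⟨x, x⟩_L = 1/κ and positive time-like component. -/
def inLorentz {n : ℕ} (κ : ℝ) (x : Fin (n + 1) → ℝ) : Prop :=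
  lorentzInner x x = 1 / κ ∧ 0 < x 0

/-- Lorentz distance d^κ(x,y) = (1/√|κ|)·arcosh(κ·⟨x,y⟩_L). -/
noncomputable def lorentzDist {n : ℕ} (κ : ℝ) (x y : Fin (n + 1) → ℝ) : ℝ :=
  (1 / Real.sqrt |κ|) * arcosh (κ * lorentzInner x y)

/-!
A point of ℝ^{n+1} whose time component is `√(‖v‖² − 1/κ)` over an arbitrary space part `v` lies
on the hyperboloid `𝕃^{n,κ}` for every `κ < 0`: the square root is of a positive number and squares
back, so `⟨x, x⟩_L = −(‖v‖² − 1/κ) + ‖v‖² = 1/κ`. The HRC point is this lift of `v = √(κ₁/κ₂) · w`,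
whose squared norm is `(κ₁/κ₂)‖w‖²` because `κ₁/κ₂ > 0`.
-/

theorem lorentzInner_cons_self {n : ℕ} (t : ℝ) (v : Fin n → ℝ) :
    lorentzInner (Fin.cons t v : Fin (n + 1) → ℝ) (Fin.cons t v) = -t ^ 2 + ∑ i, v i ^ 2 := by
  simp only [lorentzInner, Fin.cons_zero, Fin.cons_succ, sq]

theorem inLorentz_cons_sqrt {n : ℕ} {κ : ℝ} (hκ : κ < 0) (v : Fin n → ℝ) :
    inLorentz κ (Fin.cons (Real.sqrt (∑ i, v i ^ 2 - 1 / κ)) v : Fin (n + 1) → ℝ) := by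
  have hpos : 0 < ∑ i, v i ^ 2 - 1 / κ := by
    have := one_div_neg.mpr hκ
    have : 0 ≤ ∑ i, v i ^ 2 := Finset.sum_nonneg fun i _ => sq_nonneg (v i)
    linarith
  refine ⟨?_, by simpa only [Fin.cons_zero] using Real.sqrt_pos.mpr hpos⟩
  rw [lorentzInner_cons_self, Real.sq_sqrt hpos.le]
  ring

theorem sum_sq_sqrt_mul {n : ℕ} {c : ℝ} (hc : 0 ≤ c) (w : Fin n → ℝ) :
    ∑ i, (Real.sqrt c * w i) ^ 2 = c * ∑ i, w i ^ 2 := by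
  simp only [mul_pow, Real.sq_sqrt hc, Finset.mul_sum]

theorem hrc_mem_lorentz_general (d' : ℕ)
    (κ1 κ2 : ℝ) (hκ1 : κ1 < 0) (hκ2 : κ2 < 0)
    (w : Fin d' → ℝ) :
    inLorentz κ2
      (Fin.cons (Real.sqrt (κ1 / κ2 * ∑ i : Fin d', w i ^ 2 - 1 / κ2))
        (fun i => Real.sqrt (κ1 / κ2) * w i)) := by
  have hratio : 0 ≤ κ1 / κ2 := (div_pos_of_neg_of_neg hκ1 hκ2).le
  have h := inLorentz_cons_sqrt hκ2 fun i => Real.sqrt (κ1 / κ2) * w i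
  rwa [sum_sq_sqrt_mul hratio] at h

/-- The HRC transform applied to the space-like part lies in 𝕃^{d',κ₂}. -/
theorem hrc_mem_lorentz (d d' : ℕ) (hd : 0 < d) (hd' : 0 < d')
    (κ1 κ2 : ℝ) (hκ1 : κ1 < 0) (hκ2 : κ2 < 0)
    (x : Fin (d + 1) → ℝ) (hx : inLorentz κ1 x)
    (fr : (Fin d → ℝ) → (Fin d' → ℝ))
    (w : Fin d' → ℝ) (hw : w = fr (fun i => x i.succ)) :
    inLorentz κ2
      (Fin.cons (Real.sqrt (κ1 / κ2 * ∑ i : Fin d', w i ^ 2 - 1 / κ2))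
        (fun i => Real.sqrt (κ1 / κ2) * w i)) :=
  hrc_mem_lorentz_general d' κ1 κ2 hκ1 hκ2 w
end

section
/- Let x, y ∈ ℝ^{n+1} be future-directed time-like vectors, i.e. ⟨x, x⟩_L < 0, ⟨y, y⟩_L < 0, x_0 > 0, and y_0 > 0. Then ⟨x, y⟩_L ≤ −√(⟨x, x⟩_L · ⟨y, y⟩_L) < 0 (reverse Cauchy–Schwarz inequality for future-directed time-like vectors). -/
/-! Splitting off the time component, `⟨x, y⟩_L = -x₀y₀ + ⟪x_s, y_s⟫` with `‖x_s‖ < x₀`, `‖y_s‖ < y₀`.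
Euclidean Cauchy–Schwarz gives `x₀y₀ - ⟪x_s, y_s⟫ ≥ x₀y₀ - ‖x_s‖‖y_s‖ > 0`, and the square of the
latter dominates `(x₀² - ‖x_s‖²)(y₀² - ‖y_s‖²)` by the identity
`(ab - pq)² - (a² - p²)(b² - q²) = (aq - bp)²`. -/

open RealInnerProductSpace

theorem sq_sub_sq_mul_sq_sub_sq_le (a b p q : ℝ) :
    (a ^ 2 - p ^ 2) * (b ^ 2 - q ^ 2) ≤ (a * b - p * q) ^ 2 := by
  nlinarith [sq_nonneg (a * q - b * p)]

theorem sqrt_mul_sq_sub_norm_sq_le_sub_inner {E : Type*} [NormedAddCommGroup E]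
    [InnerProductSpace ℝ E] {a b : ℝ} {u v : E} (hu : ‖u‖ < a) (hv : ‖v‖ < b) :
    √((a ^ 2 - ‖u‖ ^ 2) * (b ^ 2 - ‖v‖ ^ 2)) ≤ a * b - ⟪u, v⟫ := by
  have hcs : ⟪u, v⟫ ≤ ‖u‖ * ‖v‖ := real_inner_le_norm u v
  have hnorms : ‖u‖ * ‖v‖ ≤ a * b :=
    mul_le_mul hu.le hv.le (norm_nonneg v) ((norm_nonneg u).trans hu.le)
  calc √((a ^ 2 - ‖u‖ ^ 2) * (b ^ 2 - ‖v‖ ^ 2))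
      ≤ a * b - ‖u‖ * ‖v‖ :=
        Real.sqrt_le_iff.2 ⟨by linarith, sq_sub_sq_mul_sq_sub_sq_le _ _ _ _⟩
    _ ≤ a * b - ⟪u, v⟫ := by linarith

def spacePart {n : ℕ} (x : Fin (n + 1) → ℝ) : EuclideanSpace ℝ (Fin n) :=
  WithLp.toLp 2 (Fin.tail x)

theorem lorentzInner_eq_inner_spacePart {n : ℕ} (x y : Fin (n + 1) → ℝ) :
    lorentzInner x y = -(x 0 * y 0) + ⟪spacePart x, spacePart y⟫ := by
  simp [lorentzInner, spacePart, PiLp.inner_apply, Fin.tail, mul_comm]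

theorem lorentzInner_self {n : ℕ} (x : Fin (n + 1) → ℝ) :
    lorentzInner x x = ‖spacePart x‖ ^ 2 - x 0 ^ 2 := by
  rw [lorentzInner_eq_inner_spacePart, real_inner_self_eq_norm_sq]
  ring

theorem norm_spacePart_lt_of_lorentzInner_self_neg {n : ℕ} {x : Fin (n + 1) → ℝ}
    (hx : lorentzInner x x < 0) (hx0 : 0 ≤ x 0) : ‖spacePart x‖ < x 0 :=
  (le_abs_self _).trans_lt (abs_lt_of_sq_lt_sq (by linarith [lorentzInner_self x]) hx0)

/-- Reverse Cauchy–Schwarz for future-directed time-like vectors. -/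
theorem reverse_cauchy_schwarz_timelike (n : ℕ) (x y : Fin (n + 1) → ℝ)
    (hx : lorentzInner x x < 0) (hy : lorentzInner y y < 0)
    (hx0 : 0 < x 0) (hy0 : 0 < y 0) :
    lorentzInner x y ≤ -Real.sqrt (lorentzInner x x * lorentzInner y y) ∧
      lorentzInner x y < 0 := by
  have hxs := norm_spacePart_lt_of_lorentzInner_self_neg hx hx0.le
  have hys := norm_spacePart_lt_of_lorentzInner_self_neg hy hy0.le
  have hprod : lorentzInner x x * lorentzInner y y =
      (x 0 ^ 2 - ‖spacePart x‖ ^ 2) * (y 0 ^ 2 - ‖spacePart y‖ ^ 2) := by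
    rw [lorentzInner_self, lorentzInner_self]
    ring
  have hle : lorentzInner x y ≤ -√(lorentzInner x x * lorentzInner y y) := by
    rw [hprod, lorentzInner_eq_inner_spacePart]
    linarith [sqrt_mul_sq_sub_norm_sq_le_sub_inner hxs hys]
  have hsqrt_pos : 0 < √(lorentzInner x x * lorentzInner y y) :=
    Real.sqrt_pos.2 (mul_pos_of_neg_of_neg hx hy)
  exact ⟨hle, hle.trans_lt (neg_neg_of_pos hsqrt_pos)⟩
end

section
/- Let κ < 0, let v_1, …, v_N ∈ 𝕃^{n, κ}, and let α_1, …, α_N ≥ 0 with Σ_{j=1}^N α_j > 0. Then the weighted sum s = Σ_{j=1}^N α_j v_j is future-directed time-like: its time-like component s_0 is strictly positive and ⟨s, s⟩_L ≤ (Σ_{j=1}^N α_j)²/κ < 0. -/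
/-!
The Lorentzian form is bilinear, so ⟨s, s⟩_L = Σ_{j,k} α_j α_k ⟨v_j, v_k⟩_L, and it
suffices that ⟨v_j, v_k⟩_L ≤ 1/κ for any two points of 𝕃^{n,κ}. That is the reverse
Cauchy–Schwarz inequality on the future sheet: writing ⟨x, x⟩_L = -a², ⟨y, y⟩_L = -b², the
time components satisfy x₀² = |x_s|² + a² and y₀² = |y_s|² + b², whence
x₀ y₀ ≥ |x_s| |y_s| + a b ≥ ⟨x_s, y_s⟩ + a b.
-/

section BilinearAlgebra

variable {M ι : Type*} [AddCommGroup M] [Module ℝ M]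

theorem LinearMap.BilinForm.apply_sum_smul_self_le (B : LinearMap.BilinForm ℝ M)
    (s : Finset ι) (v : ι → M) {α : ι → ℝ} (hα : ∀ j ∈ s, 0 ≤ α j) {c : ℝ}
    (hB : ∀ j ∈ s, ∀ k ∈ s, B (v j) (v k) ≤ c) :
    B (∑ j ∈ s, α j • v j) (∑ j ∈ s, α j • v j) ≤ (∑ j ∈ s, α j) ^ 2 * c := by
  simp only [map_sum, map_smul, LinearMap.sum_apply, LinearMap.smul_apply, smul_eq_mul]
  calc ∑ k ∈ s, α k * ∑ j ∈ s, α j * B (v j) (v k)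
      ≤ ∑ k ∈ s, α k * ∑ j ∈ s, α j * c := by
        gcongr with k hk j hj
        · exact hα k hk
        · exact hα j hj
        · exact hB j hj k hk
    _ = (∑ j ∈ s, α j) ^ 2 * c := by
        simp only [← Finset.sum_mul, sq, mul_assoc]

end BilinearAlgebra

section Lorentz

variable {n : ℕ}

noncomputable def lorentzForm (n : ℕ) : LinearMap.BilinForm ℝ (Fin (n + 1) → ℝ) :=
  LinearMap.mk₂ ℝ lorentzInner
    (fun x x' y => by simp only [lorentzInner, Pi.add_apply, add_mul, Finset.sum_add_distrib]; ring)
    (fun c x y => by simp only [lorentzInner, Pi.smul_apply, smul_eq_mul, mul_add,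
      Finset.mul_sum, mul_neg, mul_assoc])
    (fun x y y' => by simp only [lorentzInner, Pi.add_apply, mul_add, Finset.sum_add_distrib]; ring)
    (fun c x y => by simp only [lorentzInner, Pi.smul_apply, smul_eq_mul, mul_add,
      Finset.mul_sum, mul_neg, mul_left_comm _ c])

@[simp]
theorem lorentzForm_apply (x y : Fin (n + 1) → ℝ) : lorentzForm n x y = lorentzInner x y := rfl

theorem lorentzInner_le_neg_mul {x y : Fin (n + 1) → ℝ} {a b : ℝ}
    (hx₀ : 0 < x 0) (hy₀ : 0 < y 0) (hx : lorentzInner x x ≤ -a ^ 2)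
    (hy : lorentzInner y y ≤ -b ^ 2) : lorentzInner x y ≤ -(a * b) := by
  unfold lorentzInner at *
  set A := ∑ i : Fin n, x i.succ * x i.succ
  set B := ∑ i : Fin n, y i.succ * y i.succ
  set P := ∑ i : Fin n, x i.succ * y i.succ
  have hA : 0 ≤ A := Finset.sum_nonneg fun i _ => mul_self_nonneg _
  have hB : 0 ≤ B := Finset.sum_nonneg fun i _ => mul_self_nonneg _
  have hPAB : P ^ 2 ≤ A * B := by
    simpa only [sq] using Finset.sum_mul_sq_le_sq_mul_sq Finset.univ
      (fun i : Fin n => x i.succ) (fun i => y i.succ)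
  -- AM–GM: `2 a b P ≤ A b² + a² B`, because `(2 a b P)² ≤ 4 a² b² A B ≤ (A b² + a² B)²`.
  have hcross : 2 * (a * b) * P ≤ A * b ^ 2 + a ^ 2 * B := by
    apply abs_le_of_sq_le_sq' _ (by positivity) |>.2
    nlinarith [sq_nonneg (A * b ^ 2 - a ^ 2 * B), sq_nonneg (a * b),
      mul_le_mul_of_nonneg_left hPAB (sq_nonneg (2 * (a * b)))]
  rcases le_or_gt (P + a * b) 0 with h | h
  · nlinarith [mul_pos hx₀ hy₀]
  · have : (P + a * b) ^ 2 ≤ (x 0 * y 0) ^ 2 := by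
      nlinarith [mul_le_mul (show A + a ^ 2 ≤ x 0 * x 0 by linarith)
        (show B + b ^ 2 ≤ y 0 * y 0 by linarith) (by positivity) (mul_self_nonneg _)]
    have := (pow_le_pow_iff_left₀ h.le (mul_pos hx₀ hy₀).le two_ne_zero).1 this
    linarith

theorem inLorentz.lorentzInner_le {κ : ℝ} (hκ : κ < 0) {x y : Fin (n + 1) → ℝ}
    (hx : inLorentz κ x) (hy : inLorentz κ y) : lorentzInner x y ≤ 1 / κ := by
  have hc : 0 ≤ -(1 / κ) := by rw [neg_nonneg]; exact (one_div_neg.2 hκ).le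
  have hsq : √(-(1 / κ)) ^ 2 = -(1 / κ) := Real.sq_sqrt hc
  have h := lorentzInner_le_neg_mul hx.2 hy.2 (hx.1.trans_le (by rw [hsq, neg_neg]))
    (hy.1.trans_le (by rw [hsq, neg_neg]))
  rwa [← sq, hsq, neg_neg] at h

end Lorentz

/-- A nonnegative, nontrivially weighted sum of points of 𝕃^{n,κ}
is future-directed time-like. -/
theorem weighted_sum_timelike (n N : ℕ) (κ : ℝ) (hκ : κ < 0)
    (v : Fin N → (Fin (n + 1) → ℝ)) (hv : ∀ j, inLorentz κ (v j))
    (α : Fin N → ℝ) (hα : ∀ j, 0 ≤ α j) (hsum : 0 < ∑ j, α j) :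
    0 < (∑ j, α j • v j) 0 ∧
      lorentzInner (∑ j, α j • v j) (∑ j, α j • v j) ≤ (∑ j, α j) ^ 2 / κ ∧
        (∑ j, α j) ^ 2 / κ < 0 := by
  refine ⟨?_, ?_, div_neg_of_pos_of_neg (by positivity) hκ⟩
  · obtain ⟨j, -, hj⟩ : ∃ j ∈ Finset.univ, (0 : ℝ) < α j :=
      Finset.exists_lt_of_sum_lt (by simpa using hsum)
    simp only [Finset.sum_apply, Pi.smul_apply, smul_eq_mul]
    exact Finset.sum_pos' (fun k _ => mul_nonneg (hα k) (hv k).2.le)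
      ⟨j, Finset.mem_univ j, mul_pos hj (hv j).2⟩
  · have h := (lorentzForm n).apply_sum_smul_self_le Finset.univ v (fun j _ => hα j)
      (fun j _ k _ => (hv j).lorentzInner_le hκ (hv k))
    rwa [lorentzForm_apply, mul_one_div] at h
end

section
/- Let κ < 0, let x, p ∈ 𝕃^{n, κ}, and let ε > 0. Set v = x + ε·p. Then the hyperbolic positional-encoding output x̃ = v / √(|κ · ⟨v, v⟩_L|) lies in 𝕃^{n, κ}; that is, ⟨x̃, x̃⟩_L = 1/κ and the time-like component of x̃ is strictly positive. -/
/-! Cauchy–Schwarz on the space-like parts shows that two vectors of the upper sheet have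
nonpositive Lorentz product, so `v = x + ε • p` is time-like with `v 0 > 0`; dividing a time-like
vector by `√(κ ⟨v, v⟩_L)` puts it on the upper sheet of the hyperboloid. -/

theorem lorentzInner_smul_smul {n : ℕ} (c : ℝ) (x : Fin (n + 1) → ℝ) :
    lorentzInner (c • x) (c • x) = c ^ 2 * lorentzInner x x := by
  simp only [lorentzInner, Pi.smul_apply, smul_eq_mul, mul_add, Finset.mul_sum]
  congr 1
  · ring
  · exact Finset.sum_congr rfl fun _ _ => by ring

theorem lorentzInner_add_smul_self {n : ℕ} (ε : ℝ) (x p : Fin (n + 1) → ℝ) :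
    lorentzInner (x + ε • p) (x + ε • p) =
      lorentzInner x x + 2 * ε * lorentzInner x p + ε ^ 2 * lorentzInner p p := by
  have hsum : ∑ i : Fin n, (x i.succ + ε * p i.succ) * (x i.succ + ε * p i.succ) =
      ∑ i : Fin n, x i.succ * x i.succ + 2 * ε * ∑ i : Fin n, x i.succ * p i.succ +
        ε ^ 2 * ∑ i : Fin n, p i.succ * p i.succ := by
    simp only [Finset.mul_sum, ← Finset.sum_add_distrib]
    exact Finset.sum_congr rfl fun _ _ => by ring
  simp only [lorentzInner, Pi.add_apply, Pi.smul_apply, smul_eq_mul, hsum]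
  ring

theorem lorentzInner_nonpos_of_causal {n : ℕ} {x y : Fin (n + 1) → ℝ}
    (hx : lorentzInner x x ≤ 0) (hx0 : 0 ≤ x 0) (hy : lorentzInner y y ≤ 0) (hy0 : 0 ≤ y 0) :
    lorentzInner x y ≤ 0 := by
  simp only [lorentzInner, ← sq] at hx hy ⊢
  have hsq : (∑ i : Fin n, x i.succ * y i.succ) ^ 2 ≤ (x 0 * y 0) ^ 2 :=
    calc _ ≤ (∑ i : Fin n, x i.succ ^ 2) * ∑ i : Fin n, y i.succ ^ 2 :=
          Finset.sum_mul_sq_le_sq_mul_sq _ _ _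
      _ ≤ x 0 ^ 2 * y 0 ^ 2 := by gcongr <;> linarith
      _ = (x 0 * y 0) ^ 2 := by ring
  linarith [(abs_le_of_sq_le_sq' hsq (mul_nonneg hx0 hy0)).2]

theorem inLorentz_inv_sqrt_smul {n : ℕ} {κ : ℝ} (hκ : κ < 0) {v : Fin (n + 1) → ℝ}
    (hv : lorentzInner v v < 0) (hv0 : 0 < v 0) :
    inLorentz κ ((1 / Real.sqrt |κ * lorentzInner v v|) • v) := by
  have hpos : 0 < κ * lorentzInner v v := mul_pos_of_neg_of_neg hκ hv
  rw [abs_of_pos hpos]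
  refine ⟨?_, ?_⟩
  · rw [lorentzInner_smul_smul, div_pow, one_pow, Real.sq_sqrt hpos.le]
    field_simp [hv.ne]
  · simp only [Pi.smul_apply, smul_eq_mul]
    positivity

/-- The hyperbolic positional-encoding output lies in 𝕃^{n,κ}. -/
theorem positional_encoding_mem (n : ℕ) (κ : ℝ) (hκ : κ < 0)
    (x p : Fin (n + 1) → ℝ) (hx : inLorentz κ x) (hp : inLorentz κ p)
    (ε : ℝ) (hε : 0 < ε) (v : Fin (n + 1) → ℝ) (hv : v = x + ε • p) :
    inLorentz κ ((1 / Real.sqrt |κ * lorentzInner v v|) • v) := by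
  subst hv
  obtain ⟨hxx, hx0⟩ := hx
  obtain ⟨hpp, hp0⟩ := hp
  have hκ_inv : 1 / κ < 0 := one_div_neg.mpr hκ
  have hxp : lorentzInner x p ≤ 0 :=
    lorentzInner_nonpos_of_causal (hxx ▸ hκ_inv.le) hx0.le (hpp ▸ hκ_inv.le) hp0.le
  apply inLorentz_inv_sqrt_smul hκ
  · rw [lorentzInner_add_smul_self, hxx, hpp]
    nlinarith [mul_nonpos_of_nonneg_of_nonpos hε.le hxp]
  · simp only [Pi.add_apply, Pi.smul_apply, smul_eq_mul]
    positivity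
end
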